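/- arXiv:2212.06227 — 2 statements merged into one kernel-verified Lean document; each statement's English description precedes it below -/
import Mathlib

section
/- For every κ ∈ ℝ, Υ(λ) → 0 as |λ| → ∞ with λ ∈ Π_κ⁺; that is, for every δ > 0 there exists Λ > 0 such that for all λ ∈ ℂ with Re λ > −κ and |λ| > Λ, and all indices (i,j) and all s, x ∈ [0,1], one has |v_{ij}(s,x,λ)| < δ. -/
open MeasureTheory Set Filter Topology

noncomputable section

/-- `f` is absolutely continuous on `[0,1]` with integrable derivative: there is an
integrable `g` with `f x = f 0 + ∫ t in 0..x, g t` for all `x ∈ [0,1]`. -/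
def ACI {E : Type*} [NormedAddCommGroup E] [NormedSpace ℝ E] (f : ℝ → E) : Prop :=
  ∃ g : ℝ → E, IntervalIntegrable g volume 0 1 ∧
    ∀ x ∈ Set.Icc (0 : ℝ) 1, f x = f 0 + ∫ t in (0:ℝ)..x, g t

/-- The Sobolev class `W¹ₙ[0,1]`: the derivatives of order `< n` are absolutely
continuous and the `n`-th derivative is integrable; `W¹₀ = L¹[0,1]`. -/
def SobW {E : Type*} [NormedAddCommGroup E] [NormedSpace ℝ E] (n : ℕ) (f : ℝ → E) : Prop :=
  (∀ k < n, ACI (deriv^[k] f)) ∧ IntervalIntegrable (deriv^[n] f) volume 0 1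

/-!
A Riemann–Lebesgue lemma, uniform in the endpoints of integration. On the half-plane every
exponential occurring in the `v_{ij}` has modulus at most `exp (|κ| ρ(1))`. Approximate `q` in `L¹`
by `a h` with `h` smooth (a continuous approximation of `q` divided by a continuous approximation
of `a` kept `≥ ε`, then smoothed): the error costs at most `exp (|κ| ρ(1))` times the `L¹` distance.
Since `ρ' = a` almost everywhere, `z a h exp (z ρ) = (h exp (z ρ))' - h' exp (z ρ)`, and the
fundamental theorem of calculus for absolutely continuous functions bounds the main part by
`O(1 / |z|)`.
-/

section

open scoped NNReal Complex

theorem LipschitzOnWith.comp_absolutelyContinuousOnInterval {X Y : Type*} [PseudoMetricSpace X]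
    [PseudoMetricSpace Y] {g : X → Y} {K : ℝ≥0} {s : Set X} {f : ℝ → X} {a b : ℝ}
    (hg : LipschitzOnWith K g s) (hf : AbsolutelyContinuousOnInterval f a b)
    (hfs : MapsTo f (uIcc a b) s) : AbsolutelyContinuousOnInterval (g ∘ f) a b := by
  unfold AbsolutelyContinuousOnInterval at hf ⊢
  have hK := hf.const_mul (K : ℝ)
  rw [mul_zero] at hK
  refine squeeze_zero' (.of_forall fun _ ↦ Finset.sum_nonneg fun _ _ ↦ dist_nonneg) ?_ hK
  rw [eventually_inf_principal]
  filter_upwards with E hE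
  rw [Finset.mul_sum]
  gcongr with i hi
  exact hg.dist_le_mul _ (hfs (hE.1 i hi).1) _ (hfs (hE.1 i hi).2)

theorem ContDiff.comp_absolutelyContinuousOnInterval {E : Type*} [NormedAddCommGroup E]
    [NormedSpace ℝ E] {g : ℝ → E} {f : ℝ → ℝ} {a b : ℝ} (hg : ContDiff ℝ 1 g)
    (hf : AbsolutelyContinuousOnInterval f a b) : AbsolutelyContinuousOnInterval (g ∘ f) a b := by
  obtain ⟨C, hC⟩ := hf.exists_bound
  obtain ⟨K, hK⟩ := hg.contDiffOn.exists_lipschitzOnWith one_ne_zero (convex_Icc (-C) C)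
    isCompact_Icc
  exact hK.comp_absolutelyContinuousOnInterval hf fun x hx ↦ abs_le.1 (hC x hx)

theorem AbsolutelyContinuousOnInterval.integral_eq_sub_of_ae_hasDerivAt {E : Type*}
    [NormedAddCommGroup E] [NormedSpace ℝ E] [CompleteSpace E] {F f : ℝ → E} {a b : ℝ}
    (hF : AbsolutelyContinuousOnInterval F a b) (hf : IntervalIntegrable f volume a b)
    (hF' : ∀ᵐ x, x ∈ uIcc a b → HasDerivAt F (f x) x) :
    ∫ x in a..b, f x = F b - F a := by
  refine (SeparatingDual.eq_iff_forall_dual_eq (R := ℝ)).2 fun φ ↦ ?_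
  have hφF : AbsolutelyContinuousOnInterval (φ ∘ F) a b :=
    φ.lipschitz.lipschitzOnWith.comp_absolutelyContinuousOnInterval hF (mapsTo_univ _ _)
  rw [← φ.intervalIntegral_comp_comm hf, map_sub]
  refine (intervalIntegral.integral_congr_ae ?_).trans hφF.integral_deriv_eq_sub
  filter_upwards [hF'] with x hx hxI
  exact ((φ.hasFDerivAt.comp_hasDerivAt x (hx (uIoc_subset_uIcc hxI))).deriv).symm

theorem intervalIntegral.mul_integral_mul_cexp_eq {a ρ : ℝ → ℝ} {h : ℝ → ℂ} {c d : ℝ}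
    (ha : IntervalIntegrable a volume c d) (hρ : AbsolutelyContinuousOnInterval ρ c d)
    (hρ' : ∀ᵐ t, t ∈ uIcc c d → HasDerivAt ρ (a t) t) (hh : ContDiff ℝ 1 h) (z : ℂ) (r : ℝ) :
    z * ∫ t in c..d, a t * h t * cexp (z * ↑(ρ t - r)) =
      h d * cexp (z * ↑(ρ d - r)) - h c * cexp (z * ↑(ρ c - r)) -
        ∫ t in c..d, deriv h t * cexp (z * ↑(ρ t - r)) := by
  set e : ℝ → ℂ := fun t ↦ cexp (z * ↑(ρ t - r))
  have hexp : ContDiff ℝ 1 fun u : ℝ ↦ cexp (z * ↑(u - r)) := by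
    have : ContDiff ℝ 1 fun u : ℝ ↦ ((u - r : ℝ) : ℂ) :=
      Complex.ofRealCLM.contDiff.comp (contDiff_id.sub contDiff_const)
    exact (contDiff_const.mul this).cexp
  have he : AbsolutelyContinuousOnInterval e c d := hexp.comp_absolutelyContinuousOnInterval hρ
  have hhe : AbsolutelyContinuousOnInterval (fun t ↦ h t * e t) c d :=
    (hh.contDiffOn (s := uIcc c d)).absolutelyContinuousOnInterval.fun_smul he
  have hae : IntervalIntegrable (fun t ↦ (a t : ℂ) * (h t * e t)) volume c d :=
    IntervalIntegrable.mul_continuousOn ⟨ha.1.ofReal, ha.2.ofReal⟩ hhe.continuousOn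
  have hde : IntervalIntegrable (fun t ↦ deriv h t * e t) volume c d :=
    (hh.continuous_deriv le_rfl).continuousOn.mul he.continuousOn |>.intervalIntegrable
  have hFTC := hhe.integral_eq_sub_of_ae_hasDerivAt (hde.add (hae.const_mul z)) <| by
    filter_upwards [hρ'] with t ht htI
    have he' := ((((ht htI).sub_const r).ofReal_comp).const_mul z).cexp
    exact ((hh.differentiable one_ne_zero t).hasDerivAt.mul he').congr_deriv (by ring)
  rw [intervalIntegral.integral_add hde (hae.const_mul z),
    intervalIntegral.integral_const_mul] at hFTC
  rw [eq_sub_iff_add_eq, add_comm, ← hFTC]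
  congr 2
  exact intervalIntegral.integral_congr fun t _ ↦ by ring

theorem intervalIntegral.norm_integral_mul_cexp_le {a ρ : ℝ → ℝ} {h : ℝ → ℂ} {c d C₀ C₁ K : ℝ}
    {z : ℂ} {r : ℝ} (ha : IntervalIntegrable a volume c d)
    (hρ : AbsolutelyContinuousOnInterval ρ c d) (hρ' : ∀ᵐ t, t ∈ uIcc c d → HasDerivAt ρ (a t) t)
    (hh : ContDiff ℝ 1 h) (hz : z ≠ 0) (hh₀ : ∀ t ∈ uIcc c d, ‖h t‖ ≤ C₀)
    (hh₁ : ∀ t ∈ uIcc c d, ‖deriv h t‖ ≤ C₁) (hK : ∀ t ∈ uIcc c d, ‖cexp (z * ↑(ρ t - r))‖ ≤ K) :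
    ‖∫ t in c..d, a t * h t * cexp (z * ↑(ρ t - r))‖ ≤ (2 * C₀ + C₁ * |d - c|) * K / ‖z‖ := by
  have hmul {u : ℝ → ℂ} {C : ℝ} (hu : ∀ t ∈ uIcc c d, ‖u t‖ ≤ C) :
      ∀ t ∈ uIcc c d, ‖u t * cexp (z * ↑(ρ t - r))‖ ≤ C * K := fun t ht ↦ by
    rw [norm_mul]
    exact mul_le_mul (hu t ht) (hK t ht) (norm_nonneg _) ((norm_nonneg _).trans (hu t ht))
  rw [le_div_iff₀ (norm_pos_iff.2 hz), mul_comm, ← norm_mul,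
    mul_integral_mul_cexp_eq ha hρ hρ' hh z r]
  calc _ ≤ C₀ * K + C₀ * K + C₁ * K * |d - c| :=
        (norm_sub_le _ _).trans <| add_le_add ((norm_sub_le _ _).trans <|
          add_le_add (hmul hh₀ d right_mem_uIcc) (hmul hh₀ c left_mem_uIcc)) <|
          norm_integral_le_of_norm_le_const fun t ht ↦ hmul hh₁ t (uIoc_subset_uIcc ht)
    _ = (2 * C₀ + C₁ * |d - c|) * K := by ring

theorem exists_continuous_integral_norm_sub_mul_le {s : Set ℝ} {a : ℝ → ℝ} {q : ℝ → ℂ}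
    {ε η : ℝ} (hs : IsCompact s) (ha : IntegrableOn a s) (hε : 0 < ε) (hεa : ∀ x ∈ s, ε ≤ a x)
    (hq : IntegrableOn q s) (hη : 0 < η) :
    ∃ ψ : ℝ → ℂ, Continuous ψ ∧ ∫ t in s, ‖q t - a t * ψ t‖ ≤ η := by
  obtain ⟨g, -, hqg, hg, -⟩ := hq.exists_hasCompactSupport_integral_sub_le (half_pos hη)
  obtain ⟨C, hC⟩ := hs.exists_bound_of_continuousOn hg.continuousOn
  set D := |C| + 1
  have hD : 0 < D := by positivity
  obtain ⟨b, -, hab, hb, -⟩ :=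
    ha.exists_hasCompactSupport_integral_sub_le (ε := η * ε / (2 * D)) (by positivity)
  -- dividing by `max (b t) ε` keeps the quotient bounded, and costs only `|a - b|` since `ε ≤ a`
  have hbε : Continuous fun t ↦ ((max (b t) ε : ℝ) : ℂ) :=
    Complex.continuous_ofReal.comp (hb.max continuous_const)
  have hψ : Continuous fun t ↦ g t / ((max (b t) ε : ℝ) : ℂ) := hg.div₀ hbε fun t ↦
    Complex.ofReal_ne_zero.2 (hε.trans_le (le_max_right _ _)).ne'
  refine ⟨_, hψ, ?_⟩
  have hpt : ∀ t ∈ s,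
      ‖q t - a t * (g t / ↑(max (b t) ε))‖ ≤ ‖q t - g t‖ + D / ε * ‖a t - b t‖ := by
    intro t ht
    have hm : 0 < max (b t) ε := hε.trans_le (le_max_right _ _)
    have hm' : (↑(max (b t) ε) : ℂ) ≠ 0 := Complex.ofReal_ne_zero.2 hm.ne'
    have hgt : g t - a t * (g t / ↑(max (b t) ε)) =
        (↑(max (b t) ε - a t) / ↑(max (b t) ε)) * g t := by
      field_simp
      push_cast
      ring
    have hmax : |max (b t) ε - a t| ≤ |a t - b t| := by
      simpa [max_eq_left (hεa t ht), abs_sub_comm] using abs_max_sub_max_le_abs (b t) (a t) ε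
    calc _ ≤ ‖q t - g t‖ + ‖g t - a t * (g t / ↑(max (b t) ε))‖ :=
          norm_sub_le_norm_sub_add_norm_sub _ _ _
      _ ≤ _ := by
        gcongr
        rw [hgt, norm_mul, norm_div, Complex.norm_real, Complex.norm_real, Real.norm_eq_abs,
          Real.norm_eq_abs, abs_of_pos hm, Real.norm_eq_abs]
        have hgD : ‖g t‖ ≤ D := (hC t ht).trans ((le_abs_self C).trans (lt_add_one _).le)
        calc _ ≤ |a t - b t| / ε * D := by gcongr; exact le_max_right _ _
          _ = D / ε * |a t - b t| := by ring
  have hqg' : IntegrableOn (fun t ↦ ‖q t - g t‖) s :=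
    (hq.sub (hg.continuousOn.integrableOn_compact hs)).norm
  have hab' : IntegrableOn (fun t ↦ D / ε * ‖a t - b t‖) s :=
    (ha.sub (hb.continuousOn.integrableOn_compact hs)).norm.const_mul _
  calc _ ≤ ∫ t in s, (‖q t - g t‖ + D / ε * ‖a t - b t‖) :=
        integral_mono_of_nonneg (.of_forall fun _ ↦ norm_nonneg _) (hqg'.add hab')
          (ae_restrict_of_forall_mem hs.measurableSet hpt)
    _ = (∫ t in s, ‖q t - g t‖) + D / ε * ∫ t in s, ‖a t - b t‖ := by
        rw [integral_add hqg' hab', integral_const_mul]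
    _ ≤ η / 2 + D / ε * (η * ε / (2 * D)) := by gcongr
    _ = η := by field_simp; ring

theorem exists_contDiff_integral_norm_sub_mul_le {s : Set ℝ} {a : ℝ → ℝ} {q : ℝ → ℂ}
    {ε η : ℝ} (hs : IsCompact s) (ha : IntegrableOn a s) (hε : 0 < ε) (hεa : ∀ x ∈ s, ε ≤ a x)
    (hq : IntegrableOn q s) (hη : 0 < η) :
    ∃ h : ℝ → ℂ, ContDiff ℝ 1 h ∧ ∫ t in s, ‖q t - a t * h t‖ ≤ η := by
  obtain ⟨ψ, hψ, hqψ⟩ :=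
    exists_continuous_integral_norm_sub_mul_le hs ha hε hεa hq (half_pos hη)
  set A := ∫ t in s, |a t|
  have hA : 0 ≤ A := integral_nonneg fun _ ↦ abs_nonneg _
  obtain ⟨h, hh, hψh, -⟩ := hψ.exists_contDiff_approx 1 (ε := fun _ ↦ η / (2 * (A + 1)))
    continuous_const fun _ ↦ by positivity
  refine ⟨h, hh, ?_⟩
  have hqψ' : IntegrableOn (fun t ↦ ‖q t - a t * ψ t‖) s :=
    (hq.sub (IntegrableOn.mul_continuousOn ha.ofReal hψ.continuousOn hs)).norm
  have ha' : IntegrableOn (fun t ↦ η / (2 * (A + 1)) * |a t|) s := ha.abs.const_mul _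
  have hpt : ∀ t ∈ s, ‖q t - a t * h t‖ ≤ ‖q t - a t * ψ t‖ + η / (2 * (A + 1)) * |a t| := by
    intro t _
    calc _ ≤ ‖q t - a t * ψ t‖ + ‖a t * ψ t - a t * h t‖ :=
          norm_sub_le_norm_sub_add_norm_sub _ _ _
      _ ≤ _ := by
        rw [← mul_sub, norm_mul, Complex.norm_real, Real.norm_eq_abs, mul_comm (η / _)]
        gcongr
        exact (dist_eq_norm' (h t) (ψ t) ▸ hψh t).le
  calc _ ≤ ∫ t in s, (‖q t - a t * ψ t‖ + η / (2 * (A + 1)) * |a t|) :=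
        integral_mono_of_nonneg (.of_forall fun _ ↦ norm_nonneg _) (hqψ'.add ha')
          (ae_restrict_of_forall_mem hs.measurableSet hpt)
    _ = (∫ t in s, ‖q t - a t * ψ t‖) + η / (2 * (A + 1)) * A := by
        rw [integral_add hqψ' ha', integral_const_mul]
    _ ≤ η / 2 + η / 2 := by
        gcongr
        rw [div_mul_eq_mul_div, div_le_div_iff₀ (by positivity) two_pos]
        nlinarith
    _ = η := add_halves η

theorem intervalIntegral.norm_integral_mul_le {f g : ℝ → ℂ} {s : Set ℝ} {c d K : ℝ}
    (hcd : c ≤ d) (hs : Icc c d ⊆ s) (hf : IntegrableOn f s) (hg : ∀ t ∈ Icc c d, ‖g t‖ ≤ K) :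
    ‖∫ t in c..d, f t * g t‖ ≤ K * ∫ t in s, ‖f t‖ := by
  have hK : 0 ≤ K := (norm_nonneg _).trans (hg c (left_mem_Icc.2 hcd))
  have hfn : IntegrableOn (fun t ↦ ‖f t‖) s := hf.norm
  calc _ ≤ ∫ t in c..d, K * ‖f t‖ := by
        refine norm_integral_le_of_norm_le hcd (.of_forall fun t ht ↦ ?_)
          ((hfn.mono_set (uIcc_of_le hcd ▸ hs)).intervalIntegrable.const_mul K)
        rw [norm_mul, mul_comm]
        gcongr
        exact hg t (Ioc_subset_Icc_self ht)
    _ = K * ∫ t in Ioc c d, ‖f t‖ := by rw [integral_const_mul, integral_of_le hcd]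
    _ ≤ K * ∫ t in s, ‖f t‖ := mul_le_mul_of_nonneg_left (setIntegral_mono_set hfn
          (.of_forall fun _ ↦ norm_nonneg _) (Ioc_subset_Icc_self.trans hs).eventuallyLE) hK

theorem exists_forall_norm_integral_mul_mul_cexp_lt {a ρ : ℝ → ℝ} {h : ℝ → ℂ} {α β δ K : ℝ}
    (ha : IntegrableOn a (Icc α β)) (hρ : AbsolutelyContinuousOnInterval ρ α β)
    (hρ' : ∀ᵐ t, t ∈ Icc α β → HasDerivAt ρ (a t) t) (hh : ContDiff ℝ 1 h) (hδ : 0 < δ) :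
    ∃ Λ > 0, ∀ z : ℂ, Λ < ‖z‖ → ∀ r c d, α ≤ c → c ≤ d → d ≤ β →
      (∀ t ∈ Icc c d, ‖cexp (z * ↑(ρ t - r))‖ ≤ K) →
        ‖∫ t in c..d, a t * h t * cexp (z * ↑(ρ t - r))‖ < δ := by
  obtain ⟨C₀, hC₀⟩ := isCompact_Icc.exists_bound_of_continuousOn (s := Icc α β)
    hh.continuous.continuousOn
  obtain ⟨C₁, hC₁⟩ := isCompact_Icc.exists_bound_of_continuousOn (s := Icc α β)
    (hh.continuous_deriv le_rfl).continuousOn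
  set N := (2 * C₀ + C₁ * (β - α)) * K
  refine ⟨max 1 (N / δ), by positivity, fun z hz r c d hαc hcd hdβ hzK ↦ ?_⟩
  have hz₀ : 0 < ‖z‖ := one_pos.trans_le (le_max_left _ _) |>.trans hz
  have hsub : uIcc c d ⊆ Icc α β := uIcc_of_le hcd ▸ Icc_subset_Icc hαc hdβ
  rw [← uIcc_of_le hcd] at hzK
  have hC₁K : 0 ≤ C₁ * K := mul_nonneg ((norm_nonneg _).trans (hC₁ c (hsub left_mem_uIcc)))
    ((norm_nonneg _).trans (hzK c left_mem_uIcc))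
  have hN : (2 * C₀ + C₁ * |d - c|) * K ≤ N := by
    rw [abs_of_nonneg (sub_nonneg.2 hcd)]
    nlinarith
  have hzN : N / δ < ‖z‖ := (le_max_right _ _).trans_lt hz
  rw [div_lt_iff₀ hδ] at hzN
  calc _ ≤ (2 * C₀ + C₁ * |d - c|) * K / ‖z‖ :=
        intervalIntegral.norm_integral_mul_cexp_le (ha.mono_set hsub).intervalIntegrable
          (hρ.mono (hsub.trans Icc_subset_uIcc)) (hρ'.mono fun t ht htI ↦ ht (hsub htI)) hh
          (norm_pos_iff.1 hz₀) (fun t ht ↦ hC₀ t (hsub ht)) (fun t ht ↦ hC₁ t (hsub ht)) hzK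
    _ ≤ N / ‖z‖ := by gcongr
    _ < δ := by
        rw [div_lt_iff₀ hz₀]
        linarith

theorem exists_forall_norm_integral_mul_cexp_lt {a ρ : ℝ → ℝ} {q : ℝ → ℂ} {α β ε K δ : ℝ}
    (ha : IntegrableOn a (Icc α β)) (hε : 0 < ε) (hεa : ∀ x ∈ Icc α β, ε ≤ a x)
    (hρ : AbsolutelyContinuousOnInterval ρ α β) (hρ' : ∀ᵐ t, t ∈ Icc α β → HasDerivAt ρ (a t) t)
    (hq : IntegrableOn q (Icc α β)) (hK : 0 < K) (hδ : 0 < δ) :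
    ∃ Λ > 0, ∀ z : ℂ, Λ < ‖z‖ → ∀ r c d, α ≤ c → c ≤ d → d ≤ β →
      (∀ t ∈ Icc c d, ‖cexp (z * ↑(ρ t - r))‖ ≤ K) →
        ‖∫ t in c..d, q t * cexp (z * ↑(ρ t - r))‖ < δ := by
  obtain ⟨h, hh, hqh⟩ := exists_contDiff_integral_norm_sub_mul_le isCompact_Icc ha hε hεa hq
    (η := δ / (2 * K)) (by positivity)
  obtain ⟨Λ, hΛ, hsmooth⟩ :=
    exists_forall_norm_integral_mul_mul_cexp_lt (K := K) ha hρ hρ' hh (half_pos hδ)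
  refine ⟨Λ, hΛ, fun z hz r c d hαc hcd hdβ hzK ↦ ?_⟩
  have hsub : uIcc c d ⊆ Icc α β := uIcc_of_le hcd ▸ Icc_subset_Icc hαc hdβ
  have he : ContinuousOn (fun t ↦ cexp (z * ↑(ρ t - r))) (uIcc c d) :=
    (by fun_prop : Continuous fun u : ℝ ↦ cexp (z * ↑(u - r))).comp_continuousOn
      (hρ.mono (hsub.trans Icc_subset_uIcc)).continuousOn
  have hah : IntegrableOn (fun t ↦ (a t : ℂ) * h t) (Icc α β) :=
    IntegrableOn.mul_continuousOn ha.ofReal hh.continuous.continuousOn isCompact_Icc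
  have hqah : IntegrableOn (fun t ↦ q t - a t * h t) (Icc α β) := hq.sub hah
  have hahe := (hah.mono_set hsub).intervalIntegrable.mul_continuousOn he
  have hqahe := (hqah.mono_set hsub).intervalIntegrable.mul_continuousOn he
  have hrem : ‖∫ t in c..d, (q t - a t * h t) * cexp (z * ↑(ρ t - r))‖ ≤ δ / 2 :=
    calc _ ≤ K * ∫ t in Icc α β, ‖q t - a t * h t‖ :=
          intervalIntegral.norm_integral_mul_le hcd (Icc_subset_Icc hαc hdβ) hqah hzK
      _ ≤ K * (δ / (2 * K)) := by gcongr
      _ = δ / 2 := by field_simp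
  calc _ = ‖(∫ t in c..d, (q t - a t * h t) * cexp (z * ↑(ρ t - r))) +
        ∫ t in c..d, a t * h t * cexp (z * ↑(ρ t - r))‖ := by
        rw [← intervalIntegral.integral_add hqahe hahe]
        congr 2 with t
        ring
    _ < δ / 2 + δ / 2 := (norm_add_le _ _).trans_lt
        (add_lt_add_of_le_of_lt hrem (hsmooth z hz r c d hαc hcd hdβ hzK))
    _ = δ := add_halves δ

theorem norm_cexp_mul_ofReal_le {l : ℂ} {κ u M : ℝ} (hl : -κ < l.re) (hMu : -M ≤ u) (hu : u ≤ 0) :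
    ‖cexp (l * u)‖ ≤ Real.exp (|κ| * M) := by
  rw [Complex.norm_exp, Complex.re_mul_ofReal, Real.exp_le_exp]
  nlinarith [mul_nonneg (sub_nonneg.2 (le_abs_self κ)) (neg_nonneg.2 hu),
    mul_nonneg (abs_nonneg κ) (neg_le_iff_add_nonneg.1 hMu)]

theorem exists_forall_norm_integral_mul_cexp_lt_of_neg_lt_re {a ρ : ℝ → ℝ} {q : ℝ → ℂ}
    {α β ε κ δ : ℝ} (hαβ : α ≤ β) (ha : IntegrableOn a (Icc α β)) (hε : 0 < ε)
    (hεa : ∀ x ∈ Icc α β, ε ≤ a x) (hρ : ∀ x, ρ x = ∫ t in α..x, a t)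
    (hq : IntegrableOn q (Icc α β)) (hδ : 0 < δ) :
    ∃ Λ > 0, ∀ l : ℂ, -κ < l.re → Λ < ‖l‖ → ∀ γ ∈ Icc α β, ∀ c d, α ≤ c → c ≤ d → d ≤ β →
      (γ ≤ c → ‖∫ t in c..d, q t * cexp (l * ↑(ρ γ - ρ t))‖ < δ) ∧
      (d ≤ γ → ‖∫ t in c..d, q t * cexp (l * ↑(ρ t - ρ γ))‖ < δ) := by
  have hρfun : ρ = fun x ↦ ∫ t in α..x, a t := funext hρ
  have haI : IntervalIntegrable a volume α β :=
    (intervalIntegrable_iff_integrableOn_Icc_of_le hαβ).2 ha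
  have hρac : AbsolutelyContinuousOnInterval ρ α β :=
    hρfun ▸ haI.absolutelyContinuousOnInterval_intervalIntegral left_mem_uIcc
  have hρ' : ∀ᵐ t, t ∈ Icc α β → HasDerivAt ρ (a t) t := by
    filter_upwards [haI.ae_hasDerivAt_integral] with t ht htI
    exact hρfun ▸ ht (Icc_subset_uIcc htI) α left_mem_uIcc
  have hmono : MonotoneOn ρ (Icc α β) := fun x hx y hy hxy ↦ by
    rw [← sub_nonneg, hρ, hρ, intervalIntegral.integral_interval_sub_left
      (haI.mono_set (uIcc_subset_uIcc_left (Icc_subset_uIcc hy)))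
      (haI.mono_set (uIcc_subset_uIcc_left (Icc_subset_uIcc hx)))]
    exact intervalIntegral.integral_nonneg hxy fun t ht ↦
      hε.le.trans (hεa t ⟨hx.1.trans ht.1, ht.2.trans hy.2⟩)
  obtain ⟨Λ, hΛ, hmain⟩ := exists_forall_norm_integral_mul_cexp_lt ha hε hεa hρac hρ' hq
    (Real.exp_pos (|κ| * (ρ β - ρ α))) hδ
  refine ⟨Λ, hΛ, fun l hl hlΛ γ hγ c d hαc hcd hdβ ↦ ⟨fun hγc ↦ ?_, fun hdγ ↦ ?_⟩⟩
  · have hneg (t : ℝ) : -l * ↑(ρ t - ρ γ) = l * ↑(ρ γ - ρ t) := by push_cast; ring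
    have hmain' := hmain (-l) (by rwa [norm_neg]) (ρ γ) c d hαc hcd hdβ
    simp only [hneg] at hmain'
    refine hmain' fun t ht ↦ ?_
    have ht' : t ∈ Icc α β := ⟨hαc.trans ht.1, ht.2.trans hdβ⟩
    exact norm_cexp_mul_ofReal_le hl
      (by linarith [hmono ⟨le_rfl, hαβ⟩ hγ hγ.1, hmono ht' ⟨hαβ, le_rfl⟩ ht'.2])
      (sub_nonpos.2 (hmono hγ ht' (hγc.trans ht.1)))
  · refine hmain l hlΛ _ c d hαc hcd hdβ fun t ht ↦ ?_
    have ht' : t ∈ Icc α β := ⟨hαc.trans ht.1, ht.2.trans hdβ⟩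
    exact norm_cexp_mul_ofReal_le hl
      (by linarith [hmono ⟨le_rfl, hαβ⟩ ht' ht'.1, hmono hγ ⟨hαβ, le_rfl⟩ hγ.2])
      (sub_nonpos.2 (hmono ht' hγ (ht.2.trans hdγ)))

end

theorem statement3_general
    (a1 a2 : ℝ → ℝ) (b11 b12 b21 b22 : ℝ → ℂ)
    (ha1 : IntegrableOn a1 (Set.Icc 0 1) volume)
    (ha2 : IntegrableOn a2 (Set.Icc 0 1) volume)
    (hb11i : IntegrableOn b11 (Set.Icc 0 1) volume)
    (hb12i : IntegrableOn b12 (Set.Icc 0 1) volume)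
    (hb21i : IntegrableOn b21 (Set.Icc 0 1) volume)
    (hb22i : IntegrableOn b22 (Set.Icc 0 1) volume)
    (ε : ℝ) (hε : 0 < ε)
    (hgap : ∀ x ∈ Set.Icc (0:ℝ) 1, ε ≤ a1 x - a2 x)
    (b : ℝ → ℂ) (hb : ∀ x, b x = Complex.exp (∫ t in (0:ℝ)..x, (b11 t - b22 t)))
    (q12 q21 : ℝ → ℂ)
    (hq12 : ∀ x, q12 x = b12 x * (b x)⁻¹)
    (hq21 : ∀ x, q21 x = b21 x * b x)
    (ρ : ℝ → ℝ) (hρ : ∀ x, ρ x = ∫ t in (0:ℝ)..x, (a1 t - a2 t))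
    (v11 v12 v21 v22 : ℝ → ℝ → ℂ → ℂ)
    (hv11 : ∀ s x l, v11 s x l =
      -∫ t in (max x s)..1, q12 t * Complex.exp (-(l * Complex.ofReal (ρ t - ρ s))))
    (hv12 : ∀ s x l, v12 s x l =
      -∫ t in (max x s)..1, q12 t * Complex.exp (l * Complex.ofReal (ρ x - ρ t)))
    (hv21 : ∀ s x l, v21 s x l =
      -∫ t in (0:ℝ)..(min x s), q21 t * Complex.exp (-(l * Complex.ofReal (ρ x - ρ t))))
    (hv22 : ∀ s x l, v22 s x l =
      -∫ t in (0:ℝ)..(min x s), q21 t * Complex.exp (l * Complex.ofReal (ρ t - ρ s)))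
    (κ : ℝ) :
    ∀ δ > (0:ℝ), ∃ Λ > (0:ℝ), ∀ l : ℂ, -κ < l.re → Λ < ‖l‖ →
      ∀ s ∈ Set.Icc (0:ℝ) 1, ∀ x ∈ Set.Icc (0:ℝ) 1,
        ‖v11 s x l‖ < δ ∧ ‖v12 s x l‖ < δ ∧
        ‖v21 s x l‖ < δ ∧ ‖v22 s x l‖ < δ := by
  intro δ hδ
  have hbc : ContinuousOn b (Icc 0 1) := by
    have hprim := intervalIntegral.continuousOn_primitive_interval (μ := volume) (a := 0) (b := 1)
      (f := fun t ↦ b11 t - b22 t) (by rw [uIcc_of_le zero_le_one]; exact hb11i.sub hb22i)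
    rw [uIcc_of_le zero_le_one] at hprim
    exact (Complex.continuous_exp.comp_continuousOn hprim).congr fun x _ ↦ hb x
  have hq12i : IntegrableOn q12 (Icc 0 1) :=
    (IntegrableOn.mul_continuousOn hb12i (hbc.inv₀ fun x _ ↦ hb x ▸ Complex.exp_ne_zero _)
      isCompact_Icc).congr_fun (fun x _ ↦ (hq12 x).symm) measurableSet_Icc
  have hq21i : IntegrableOn q21 (Icc 0 1) :=
    (IntegrableOn.mul_continuousOn hb21i hbc isCompact_Icc).congr_fun
      (fun x _ ↦ (hq21 x).symm) measurableSet_Icc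
  obtain ⟨Λ₁, hΛ₁, h₁⟩ := exists_forall_norm_integral_mul_cexp_lt_of_neg_lt_re (κ := κ)
    zero_le_one (ha1.sub ha2) hε hgap hρ hq12i hδ
  obtain ⟨Λ₂, -, h₂⟩ := exists_forall_norm_integral_mul_cexp_lt_of_neg_lt_re (κ := κ)
    zero_le_one (ha1.sub ha2) hε hgap hρ hq21i hδ
  refine ⟨max Λ₁ Λ₂, lt_max_of_lt_left hΛ₁, fun l hl hlΛ s hs x hx ↦ ?_⟩
  have hl₁ := (le_max_left _ _).trans_lt hlΛ
  have hl₂ := (le_max_right _ _).trans_lt hlΛ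
  have hmax : 0 ≤ max x s := hx.1.trans (le_max_left _ _)
  have hmin : min x s ≤ 1 := (min_le_left _ _).trans hx.2
  refine ⟨?_, ?_, ?_, ?_⟩
  · rw [hv11, norm_neg]
    simpa only [← mul_neg, ← Complex.ofReal_neg, neg_sub] using
      (h₁ l hl hl₁ s hs _ 1 hmax (max_le hx.2 hs.2) le_rfl).1 (le_max_right x s)
  · rw [hv12, norm_neg]
    exact (h₁ l hl hl₁ x hx _ 1 hmax (max_le hx.2 hs.2) le_rfl).1 (le_max_left x s)
  · rw [hv21, norm_neg]
    simpa only [← mul_neg, ← Complex.ofReal_neg, neg_sub] using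
      (h₂ l hl hl₂ x hx 0 _ le_rfl (le_min hx.1 hs.1) hmin).2 (min_le_left x s)
  · rw [hv22, norm_neg]
    exact (h₂ l hl hl₂ s hs 0 _ le_rfl (le_min hx.1 hs.1) hmin).2 (min_le_right x s)

theorem statement3
    (a1 a2 : ℝ → ℝ) (b11 b12 b21 b22 : ℝ → ℂ)
    (ha1 : IntegrableOn a1 (Set.Icc 0 1) volume)
    (ha2 : IntegrableOn a2 (Set.Icc 0 1) volume)
    (hb11i : IntegrableOn b11 (Set.Icc 0 1) volume)
    (hb12i : IntegrableOn b12 (Set.Icc 0 1) volume)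
    (hb21i : IntegrableOn b21 (Set.Icc 0 1) volume)
    (hb22i : IntegrableOn b22 (Set.Icc 0 1) volume)
    (ε : ℝ) (hε : 0 < ε)
    (ha1pos : ∀ x ∈ Set.Icc (0:ℝ) 1, 0 < a1 x)
    (ha2neg : ∀ x ∈ Set.Icc (0:ℝ) 1, a2 x < 0)
    (hgap : ∀ x ∈ Set.Icc (0:ℝ) 1, ε ≤ a1 x - a2 x)
    (b : ℝ → ℂ) (hb : ∀ x, b x = Complex.exp (∫ t in (0:ℝ)..x, (b11 t - b22 t)))
    (q12 q21 : ℝ → ℂ)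
    (hq12 : ∀ x, q12 x = b12 x * (b x)⁻¹)
    (hq21 : ∀ x, q21 x = b21 x * b x)
    (ρ : ℝ → ℝ) (hρ : ∀ x, ρ x = ∫ t in (0:ℝ)..x, (a1 t - a2 t))
    (v11 v12 v21 v22 : ℝ → ℝ → ℂ → ℂ)
    (hv11 : ∀ s x l, v11 s x l =
      -∫ t in (max x s)..1, q12 t * Complex.exp (-(l * Complex.ofReal (ρ t - ρ s))))
    (hv12 : ∀ s x l, v12 s x l =
      -∫ t in (max x s)..1, q12 t * Complex.exp (l * Complex.ofReal (ρ x - ρ t)))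
    (hv21 : ∀ s x l, v21 s x l =
      -∫ t in (0:ℝ)..(min x s), q21 t * Complex.exp (-(l * Complex.ofReal (ρ x - ρ t))))
    (hv22 : ∀ s x l, v22 s x l =
      -∫ t in (0:ℝ)..(min x s), q21 t * Complex.exp (l * Complex.ofReal (ρ t - ρ s)))
    (κ : ℝ) :
    ∀ δ > (0:ℝ), ∃ Λ > (0:ℝ), ∀ l : ℂ, -κ < l.re → Λ < ‖l‖ →
      ∀ s ∈ Set.Icc (0:ℝ) 1, ∀ x ∈ Set.Icc (0:ℝ) 1,
        ‖v11 s x l‖ < δ ∧ ‖v12 s x l‖ < δ ∧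
        ‖v21 s x l‖ < δ ∧ ‖v22 s x l‖ < δ :=
  statement3_general a1 a2 b11 b12 b21 b22 ha1 ha2 hb11i hb12i hb21i hb22i ε hε hgap b hb q12 q21
    hq12 hq21 ρ hρ v11 v12 v21 v22 hv11 hv12 hv21 hv22 κ
end
end

section
/- Let L > 0, κ ∈ ℝ, and f ∈ L¹([0,L], ℂ). Then sup{ |∫_c^L f(ξ) e^{−λ(ξ−s)} dξ| : 0 ≤ s ≤ c ≤ L } → 0 as |λ| → ∞ with λ ranging over the half-plane {λ ∈ ℂ : Re λ ≥ −κ}. -/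
/-!
On the half-plane `-κ ≤ re l` and for `0 ≤ s ≤ ξ ≤ L` the kernel `e^{-l(ξ-s)}` is bounded by
`e^{|κ| L}`, so the integral depends `e^{|κ| L}`-Lipschitz on `f ∈ L¹`, uniformly in `l, s, c`.
It therefore suffices to treat a compactly supported `C¹` function `h` that is `L¹`-close to `f`;
for it, integration by parts against the antiderivative `-l⁻¹ e^{-l(ξ-s)}` bounds the integral by
`C / ‖l‖` with `C` independent of `s` and `c`.
-/

open MeasureTheory Set Filter Topology

noncomputable section

theorem MeasureTheory.Integrable.exists_contDiff_hasCompactSupport_integral_sub_le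
    {E F : Type*} [NormedAddCommGroup E] [NormedSpace ℝ E] [FiniteDimensional ℝ E]
    [MeasurableSpace E] [BorelSpace E] {μ : Measure E} [μ.Regular]
    [NormedAddCommGroup F] [NormedSpace ℝ F]
    {f : E → F} (hf : Integrable f μ) (n : ℕ∞) {ε : ℝ} (hε : 0 < ε) :
    ∃ h : E → F, ContDiff ℝ n h ∧ HasCompactSupport h ∧ ∫ x, ‖f x - h x‖ ∂μ ≤ ε := by
  obtain ⟨g, g_cpt, hfg, g_cont, g_int⟩ :=
    hf.exists_hasCompactSupport_integral_sub_le (half_pos hε)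
  set K := tsupport g
  set η := ε / 2 / (μ.real K + 1)
  have hη : 0 < η := by positivity
  obtain ⟨h, h_smooth, hgh, h_supp⟩ :=
    g_cont.exists_contDiff_approx n continuous_const fun _ => hη
  have h_cpt : HasCompactSupport h := g_cpt.mono' (h_supp.trans (subset_tsupport g))
  have h_int : Integrable h μ := h_smooth.continuous.integrable_of_hasCompactSupport h_cpt
  have hgh_le : ∀ x, ‖g x - h x‖ ≤ K.indicator (fun _ => η) x := by
    intro x
    by_cases hx : x ∈ K
    · simpa [hx, dist_eq_norm, norm_sub_rev] using (hgh x).le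
    · have hgx : g x = 0 := image_eq_zero_of_notMem_tsupport hx
      have hhx : h x = 0 :=
        Function.notMem_support.1 fun hx' => hx (subset_tsupport g (h_supp hx'))
      simp [hx, hgx, hhx]
  have hgh_int : ∫ x, ‖g x - h x‖ ∂μ ≤ ε / 2 := calc
    ∫ x, ‖g x - h x‖ ∂μ ≤ ∫ x, K.indicator (fun _ => η) x ∂μ :=
        integral_mono (g_int.sub h_int).norm
          ((integrableOn_const g_cpt.measure_lt_top.ne).integrable_indicator
            (isClosed_tsupport g).measurableSet) hgh_le
    _ = η * μ.real K := by
        rw [integral_indicator_const _ (isClosed_tsupport g).measurableSet, smul_eq_mul, mul_comm]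
    _ ≤ η * (μ.real K + 1) := by gcongr; linarith
    _ = ε / 2 := div_mul_cancel₀ _ (by positivity)
  refine ⟨h, h_smooth, h_cpt, ?_⟩
  calc ∫ x, ‖f x - h x‖ ∂μ ≤ ∫ x, (‖f x - g x‖ + ‖g x - h x‖) ∂μ :=
        integral_mono (hf.sub h_int).norm ((hf.sub g_int).norm.add (g_int.sub h_int).norm)
          fun x => norm_sub_le_norm_sub_add_norm_sub _ _ _
    _ = ∫ x, ‖f x - g x‖ ∂μ + ∫ x, ‖g x - h x‖ ∂μ :=
        integral_add (hf.sub g_int).norm (g_int.sub h_int).norm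
    _ ≤ ε := by linarith

section IntervalIntegral

variable {𝕜 : Type*} [RCLike 𝕜] {a b M : ℝ}

theorem norm_intervalIntegral_mul_le_mul_integral_norm {u v : ℝ → 𝕜} (hu : Integrable u)
    (hab : a ≤ b) (hv : ∀ x ∈ Icc a b, ‖v x‖ ≤ M) :
    ‖∫ x in a..b, u x * v x‖ ≤ M * ∫ x, ‖u x‖ := by
  have hM : 0 ≤ M := (norm_nonneg _).trans (hv a ⟨le_rfl, hab⟩)
  calc ‖∫ x in a..b, u x * v x‖ ≤ ∫ x in a..b, M * ‖u x‖ :=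
        intervalIntegral.norm_integral_le_of_norm_le hab
          (ae_of_all _ fun x hx => by
            rw [norm_mul, mul_comm]
            exact mul_le_mul_of_nonneg_right (hv x (Ioc_subset_Icc_self hx)) (norm_nonneg _))
          (hu.norm.const_mul M).intervalIntegrable
    _ = M * ∫ x in Ioc a b, ‖u x‖ := by
        rw [intervalIntegral.integral_const_mul, intervalIntegral.integral_of_le hab]
    _ ≤ M * ∫ x, ‖u x‖ := mul_le_mul_of_nonneg_left
        (setIntegral_le_integral hu.norm (ae_of_all _ fun _ => norm_nonneg _)) hM

theorem norm_intervalIntegral_mul_le_add_mul_integral_norm_sub {u w v : ℝ → 𝕜}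
    (hu : Integrable u) (hw : Integrable w) (hab : a ≤ b) (hv_cont : ContinuousOn v (Icc a b))
    (hv : ∀ x ∈ Icc a b, ‖v x‖ ≤ M) :
    ‖∫ x in a..b, u x * v x‖ ≤ ‖∫ x in a..b, w x * v x‖ + M * ∫ x, ‖u x - w x‖ := by
  have hint : ∀ {g : ℝ → 𝕜}, Integrable g → IntervalIntegrable (fun x => g x * v x) volume a b :=
    fun hg => (hg.integrableOn.mul_continuousOn (uIcc_of_le hab ▸ hv_cont)
      isCompact_uIcc).intervalIntegrable
  have hsplit : ∫ x in a..b, u x * v x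
      = (∫ x in a..b, w x * v x) + ∫ x in a..b, (u x - w x) * v x := by
    rw [← intervalIntegral.integral_add (hint hw) (hint (g := fun x => u x - w x) (hu.sub hw))]
    simp only [sub_mul, add_sub_cancel]
  rw [hsplit]
  exact (norm_add_le _ _).trans
    (add_le_add le_rfl
    (norm_intervalIntegral_mul_le_mul_integral_norm (u := fun x => u x - w x) (hu.sub hw) hab hv))

end IntervalIntegral

theorem Complex.norm_exp_neg_mul_ofReal_le {κ L t : ℝ} {l : ℂ} (hl : -κ ≤ l.re)
    (ht₀ : 0 ≤ t) (htL : t ≤ L) : ‖Complex.exp (-(l * t))‖ ≤ Real.exp (|κ| * L) := by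
  have hre : -l.re * t ≤ |κ| * t :=
    mul_le_mul_of_nonneg_right (by linarith [le_abs_self κ]) ht₀
  have hκ : |κ| * t ≤ |κ| * L := mul_le_mul_of_nonneg_left htL (abs_nonneg κ)
  rw [Complex.norm_exp, Real.exp_le_exp, Complex.neg_re, Complex.re_mul_ofReal]
  linarith

theorem Complex.hasDerivAt_neg_inv_mul_exp_neg_mul_sub {l : ℂ} (hl : l ≠ 0) (s x : ℝ) :
    HasDerivAt (fun y : ℝ => -l⁻¹ * Complex.exp (-(l * (y - s : ℝ))))
      (Complex.exp (-(l * (x - s : ℝ)))) x := by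
  have hlin : HasDerivAt (fun y : ℝ => -(l * (y - s : ℝ))) (-l) x := by
    simpa using (((hasDerivAt_id x).sub_const s).ofReal_comp.const_mul l).fun_neg
  refine (hlin.cexp.const_mul (-l⁻¹)).congr_deriv ?_
  field_simp

theorem norm_intervalIntegral_mul_exp_neg_mul_sub_le {h : ℝ → ℂ} (hh : ContDiff ℝ 1 h)
    {l : ℂ} (hl : l ≠ 0) {s a b B B' M : ℝ} (hab : a ≤ b)
    (hB : ∀ x ∈ Icc a b, ‖h x‖ ≤ B) (hB' : ∀ x ∈ Icc a b, ‖deriv h x‖ ≤ B')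
    (hM : ∀ x ∈ Icc a b, ‖Complex.exp (-(l * (x - s : ℝ)))‖ ≤ M) :
    ‖∫ x in a..b, h x * Complex.exp (-(l * (x - s : ℝ)))‖ ≤ M * (2 * B + B' * (b - a)) / ‖l‖ := by
  set e : ℝ → ℂ := fun x => Complex.exp (-(l * (x - s : ℝ)))
  have he : Continuous e := by fun_prop
  have parts := intervalIntegral.integral_mul_deriv_eq_deriv_mul
    (fun x _ => (hh.differentiable one_ne_zero x).hasDerivAt)
    (fun x _ => Complex.hasDerivAt_neg_inv_mul_exp_neg_mul_sub hl s x)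
    ((hh.continuous_deriv le_rfl).intervalIntegrable a b) (he.intervalIntegrable a b)
  have hterm : ∀ {u : ℝ → ℂ} {C : ℝ}, (∀ x ∈ Icc a b, ‖u x‖ ≤ C) →
      ∀ x ∈ Icc a b, ‖u x * (-l⁻¹ * e x)‖ ≤ C * M / ‖l‖ := by
    intro u C hC x hx
    rw [norm_mul, norm_mul, norm_neg, norm_inv, mul_div_assoc, ← div_eq_inv_mul]
    exact mul_le_mul (hC x hx) (div_le_div_of_nonneg_right (hM x hx) (norm_nonneg l))
      (by positivity) ((norm_nonneg _).trans (hC x hx))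
  have hboundary := norm_sub_le_of_le (hterm hB b ⟨hab, le_rfl⟩) (hterm hB a ⟨le_rfl, hab⟩)
  have hbulk : ‖∫ x in a..b, deriv h x * (-l⁻¹ * e x)‖ ≤ B' * M / ‖l‖ * |b - a| :=
    intervalIntegral.norm_integral_le_of_norm_le_const fun x hx =>
      hterm hB' x (Ioc_subset_Icc_self (uIoc_of_le hab ▸ hx))
  rw [abs_of_nonneg (sub_nonneg.2 hab)] at hbulk
  rw [parts]
  calc _ ≤ _ := norm_sub_le_of_le hboundary hbulk
    _ = M * (2 * B + B' * (b - a)) / ‖l‖ := by ring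

theorem exists_bound_norm_intervalIntegral_mul_exp_neg_mul_sub {h : ℝ → ℂ}
    (hh : ContDiff ℝ 1 h) (h_cpt : HasCompactSupport h) (κ L : ℝ) :
    ∃ C ≥ 0, ∀ l : ℂ, -κ ≤ l.re → l ≠ 0 → ∀ s c : ℝ, 0 ≤ s → s ≤ c → c ≤ L →
      ‖∫ ξ in c..L, h ξ * Complex.exp (-(l * (ξ - s : ℝ)))‖ ≤ C / ‖l‖ := by
  obtain ⟨B, hB⟩ := h_cpt.exists_bound_of_continuous hh.continuous
  obtain ⟨B', hB'⟩ := h_cpt.deriv.exists_bound_of_continuous (hh.continuous_deriv le_rfl)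
  have hB0 : 0 ≤ B := (norm_nonneg _).trans (hB 0)
  have hB'0 : 0 ≤ B' := (norm_nonneg _).trans (hB' 0)
  refine ⟨Real.exp (|κ| * L) * (2 * B + B' * |L|), by positivity,
    fun l hl hl0 s c hs hsc hcL => ?_⟩
  calc _ ≤ Real.exp (|κ| * L) * (2 * B + B' * (L - c)) / ‖l‖ :=
        norm_intervalIntegral_mul_exp_neg_mul_sub_le hh hl0 hcL (fun x _ => hB x)
          (fun x _ => hB' x) fun ξ hξ =>
            Complex.norm_exp_neg_mul_ofReal_le hl (by linarith [hξ.1]) (by linarith [hξ.2])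
    _ ≤ _ := by gcongr; linarith [le_abs_self L]

theorem statement6_general (L : ℝ) (κ : ℝ) (f : ℝ → ℂ)
    (hf : IntegrableOn f (Set.Icc 0 L) volume) :
    ∀ δ > (0:ℝ), ∃ Λ : ℝ, ∀ l : ℂ, -κ ≤ l.re → Λ < ‖l‖ →
      ∀ s c : ℝ, 0 ≤ s → s ≤ c → c ≤ L →
        ‖∫ ξ in c..L, f ξ * Complex.exp (-(l * Complex.ofReal (ξ - s)))‖ < δ := by
  intro δ hδ
  set M := Real.exp (|κ| * L)
  have hM : 0 < M := Real.exp_pos _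
  set F := (Icc 0 L).indicator f
  have hF : Integrable F := hf.integrable_indicator measurableSet_Icc
  obtain ⟨h, h_smooth, h_cpt, hFh⟩ :=
    hF.exists_contDiff_hasCompactSupport_integral_sub_le 1 (ε := δ / (2 * M)) (by positivity)
  obtain ⟨C, hC0, hC⟩ := exists_bound_norm_intervalIntegral_mul_exp_neg_mul_sub h_smooth h_cpt κ L
  refine ⟨2 * C / δ, fun l hl hlΛ s c hs hsc hcL => ?_⟩
  have hl0 : 0 < ‖l‖ := lt_of_le_of_lt (by positivity) hlΛ
  have hfF : ∫ ξ in c..L, f ξ * Complex.exp (-(l * Complex.ofReal (ξ - s)))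
      = ∫ ξ in c..L, F ξ * Complex.exp (-(l * Complex.ofReal (ξ - s))) :=
    intervalIntegral.integral_congr fun ξ hξ => by
      rw [uIcc_of_le hcL] at hξ
      have hξ₀ : ξ ∈ Icc 0 L := ⟨hs.trans (hsc.trans hξ.1), hξ.2⟩
      rw [show F ξ = f ξ from indicator_of_mem hξ₀ f]
  have hsmooth := (hC l hl (norm_pos_iff.1 hl0) s c hs hsc hcL).trans_lt
    (show C / ‖l‖ < δ / 2 by rw [div_lt_iff₀ hδ] at hlΛ; rw [div_lt_iff₀ hl0]; linarith)
  rw [hfF]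
  calc _ ≤ _ := norm_intervalIntegral_mul_le_add_mul_integral_norm_sub hF
          (h_smooth.continuous.integrable_of_hasCompactSupport h_cpt) hcL (M := M) (by fun_prop)
          fun ξ hξ => Complex.norm_exp_neg_mul_ofReal_le hl (by linarith [hξ.1]) (by linarith [hξ.2])
    _ < δ / 2 + M * (δ / (2 * M)) := add_lt_add_of_lt_of_le hsmooth (by gcongr)
    _ = δ := by field_simp; ring

theorem statement6 (L : ℝ) (hL : 0 < L) (κ : ℝ) (f : ℝ → ℂ)
    (hf : IntegrableOn f (Set.Icc 0 L) volume) :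
    ∀ δ > (0:ℝ), ∃ Λ : ℝ, ∀ l : ℂ, -κ ≤ l.re → Λ < ‖l‖ →
      ∀ s c : ℝ, 0 ≤ s → s ≤ c → c ≤ L →
        ‖∫ ξ in c..L, f ξ * Complex.exp (-(l * Complex.ofReal (ξ - s)))‖ < δ :=
  statement6_general L κ f hf
end
end
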